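/- For every 0 < ρ ≤ 1/2, Σ_{n=0}^∞ C_n · ρ^n · (1−ρ)^(n+1) = 1; that is, the assignment P(X = n) = C_n·ρ^n·(1−ρ)^(n+1) defines a probability distribution on ℕ. -/

import Mathlib

open Finset

/-- For every `0 < ρ ≤ 1/2`, `Σ_{n=0}^∞ C_n ρ^n (1-ρ)^(n+1) = 1`, where `C_n` is the
`n`-th Catalan number: `P(X = n) = C_n ρ^n (1-ρ)^(n+1)` defines a probability
distribution on `ℕ`. -/
theorem catalan_dist_hasSum_one (ρ : ℝ) (h0 : 0 < ρ) (h1 : ρ ≤ 1/2) :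
    HasSum (fun n : ℕ => (catalan n : ℝ) * ρ ^ n * (1 - ρ) ^ (n + 1)) 1 := by
  have hρ1 : 0 < 1 - ρ := by linarith
  set x : ℝ := ρ * (1 - ρ) with hx
  have hx0 : 0 < x := mul_pos h0 hρ1
  set f : ℕ → ℝ := fun n => (catalan n : ℝ) * x ^ n with hf
  set L : ℝ := 1 / (1 - ρ) with hL
  have hL0 : 0 < L := by positivity
  have hLrec : 1 + x * L ^ 2 = L := by
    rw [hL, hx]; field_simp; ring
  have hnn : ∀ n, 0 ≤ f n := fun n => by positivity
  -- the recurrence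
  have hrec : ∀ n : ℕ, f (n + 1) = x * ∑ k ∈ range (n + 1), f k * f (n - k) := by
    intro n
    have h1 : (catalan (n+1) : ℝ) = ∑ k ∈ range (n + 1), (catalan k : ℝ) * catalan (n - k) := by
      rw [catalan_succ']
      rw [← Nat.sum_antidiagonal_eq_sum_range_succ (fun k l => (catalan k : ℝ) * catalan l)]
      push_cast
      rfl
    rw [hf]
    simp only [h1, Finset.sum_mul, Finset.mul_sum]
    refine Finset.sum_congr rfl fun k hk => ?_
    have hk' : k ≤ n := Nat.lt_succ_iff.mp (mem_range.mp hk)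
    have : x ^ (n + 1) = x * (x ^ k * x ^ (n - k)) := by
      rw [← pow_add, ← pow_succ']
      congr 1
      omega
    rw [this]
    ring
  -- partial sums bounded by L
  have hbound : ∀ N, ∑ n ∈ range N, f n ≤ L := by
    intro N
    induction N with
    | zero => simpa using hL0.le
    | succ N ih =>
      rcases Nat.eq_zero_or_pos N with hN | hN
      · subst hN
        have h01 : f 0 = 1 := by simp [hf]
        rw [Finset.sum_range_one, h01, hL, le_div_iff₀ hρ1]
        linarith
      obtain ⟨M, rfl⟩ := Nat.exists_eq_succ_of_ne_zero hN.ne'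
      have key : ∑ n ∈ range (M + 2), f n
          = 1 + x * ∑ n ∈ range (M + 1), ∑ k ∈ range (n + 1), f k * f (n - k) := by
        rw [Finset.sum_range_succ' (f := f)]
        simp only [hrec]
        rw [← Finset.mul_sum]
        have : f 0 = 1 := by simp [hf]
        rw [this]; ring
      have hsq : ∑ n ∈ range (M + 1), ∑ k ∈ range (n + 1), f k * f (n - k)
          ≤ (∑ n ∈ range (M + 1), f n) ^ 2 := by
        have comm := Finset.sum_Ico_Ico_comm 0 (M + 1) (fun i j => f i * f (j - i))
        simp only [Nat.Ico_zero_eq_range] at comm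
        rw [← comm]
        have step : ∀ k ∈ range (M + 1),
            ∑ j ∈ Finset.Ico k (M + 1), f k * f (j - k) ≤ f k * ∑ n ∈ range (M + 1), f n := by
          intro k hk
          rw [← Finset.mul_sum]
          refine mul_le_mul_of_nonneg_left ?_ (hnn k)
          rw [Finset.sum_Ico_eq_sum_range]
          simp only [Nat.add_sub_cancel_left]
          calc ∑ i ∈ range (M + 1 - k), f i ≤ ∑ i ∈ range (M + 1), f i :=
                Finset.sum_le_sum_of_subset_of_nonneg
                  (Finset.range_subset_range.mpr (by omega)) (fun i _ _ => hnn i)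
            _ ≤ _ := le_refl _
        calc ∑ k ∈ range (M + 1), ∑ j ∈ Finset.Ico k (M + 1), f k * f (j - k)
            ≤ ∑ k ∈ range (M + 1), f k * ∑ n ∈ range (M + 1), f n :=
              Finset.sum_le_sum step
          _ = (∑ n ∈ range (M + 1), f n) ^ 2 := by rw [← Finset.sum_mul]; ring
      have hS : 0 ≤ ∑ n ∈ range (M + 1), f n := Finset.sum_nonneg fun i _ => hnn i
      have : ∑ n ∈ range (M + 2), f n ≤ 1 + x * (∑ n ∈ range (M + 1), f n) ^ 2 := by
        rw [key]
        have := mul_le_mul_of_nonneg_left hsq hx0.le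
        linarith
      have h2 : (∑ n ∈ range (M + 1), f n) ^ 2 ≤ L ^ 2 := by
        apply pow_le_pow_left₀ hS ih
      nlinarith
  have hsum : Summable f := summable_of_sum_range_le hnn hbound
  set s : ℝ := ∑' n, f n with hs
  have hnorm : Summable fun n => ‖f n‖ := by
    simpa only [Real.norm_of_nonneg (hnn _)] using hsum
  have hquad : s = 1 + x * s ^ 2 := by
    have h0' : s = f 0 + ∑' n, f (n + 1) := Summable.tsum_eq_zero_add hsum
    have hf0 : f 0 = 1 := by simp [hf]
    rw [hf0] at h0'
    have hcauchy : s * s = ∑' n, ∑ k ∈ range (n + 1), f k * f (n - k) :=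
      tsum_mul_tsum_eq_tsum_sum_range_of_summable_norm hnorm hnorm
    calc s = 1 + ∑' n, f (n + 1) := h0'
      _ = 1 + ∑' n, x * ∑ k ∈ range (n + 1), f k * f (n - k) := by
          simp only [hrec]
      _ = 1 + x * ∑' n, ∑ k ∈ range (n + 1), f k * f (n - k) := by rw [tsum_mul_left]
      _ = 1 + x * (s * s) := by rw [hcauchy]
      _ = 1 + x * s ^ 2 := by ring
  have hsle : s ≤ L := Summable.tsum_le_of_sum_range_le hsum hbound
  have hfactor : x * (s - L) * (s - 1/ρ) = 0 := by
    have e1 : x * L * (1/ρ) = 1 := by rw [hL, hx]; field_simp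
    have e2 : x * (L + 1/ρ) = 1 := by rw [hL, hx]; field_simp; ring
    nlinarith [hquad]
  have hLM : L ≤ 1/ρ := by
    rw [hL]
    apply div_le_div_of_nonneg_left one_pos.le h0
    linarith
  have hsL : s = L := by
    rcases mul_eq_zero.mp hfactor with h | h
    · rcases mul_eq_zero.mp h with h | h
      · exact absurd h hx0.ne'
      · linarith [sub_eq_zero.mp h]
    · have := sub_eq_zero.mp h
      linarith
  have hHasSum : HasSum f L := hsL ▸ hsum.hasSum
  have := hHasSum.mul_left (1 - ρ)
  have hval : (1 - ρ) * L = 1 := by rw [hL, mul_one_div, div_self hρ1.ne']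
  rw [hval] at this
  convert this using 2 with n
  show (catalan n : ℝ) * ρ ^ n * (1 - ρ) ^ (n + 1)
      = (1 - ρ) * ((catalan n : ℝ) * (ρ * (1 - ρ)) ^ n)
  rw [mul_pow]
  ring
  rfl
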